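/- Let M ∈ SL(2,ℝ), A = (-1,1) × (0,∞), and suppose the minimal second coordinate r₂ of points in A ∩ ℤ²M is attained by at least two points not on a common line through the origin. Choose r = (r₁, r₂) ∈ A ∩ ℤ²M with r₁ ≥ 0 minimal, and s = (s₁, r₂) ∈ A ∩ ℤ²M with s₁ < 0 maximal. Then F(M,t) = r₂ for t ∈ (0, 1-r₁] ∪ (-s₁, 1], and F(M,t) = 2r₂ for all other t ∈ (0,1]. -/

import Mathlib

open Matrix Set

noncomputable section

/-- The lattice ℤ²M (row-vector convention). -/
def lat (M : Matrix.SpecialLinearGroup (Fin 2) ℝ) : Set (ℝ × ℝ) :=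
  { p | ∃ m n : ℤ, p = ((m : ℝ) * M.1 0 0 + (n : ℝ) * M.1 1 0,
                        (m : ℝ) * M.1 0 1 + (n : ℝ) * M.1 1 1) }

/-- The set { y > 0 : (x,y) ∈ ℤ²M, -t < x ≤ 1-t }. -/
def Fset (M : Matrix.SpecialLinearGroup (Fin 2) ℝ) (t : ℝ) : Set ℝ :=
  { y | 0 < y ∧ ∃ x : ℝ, (x, y) ∈ lat M ∧ -t < x ∧ x ≤ 1 - t }

/-- F(M,t) = min{ y > 0 : (x,y) ∈ ℤ²M, -t < x ≤ 1-t }. -/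
noncomputable def F (M : Matrix.SpecialLinearGroup (Fin 2) ℝ) (t : ℝ) : ℝ :=
  sInf (Fset M t)

/-- The set of positive values (ℓ-k)α + n with 0 < ℓ ≤ N. -/
def gapSet (α : ℝ) (N k : ℤ) : Set ℝ :=
  { v | 0 < v ∧ ∃ l n : ℤ, 0 < l ∧ l ≤ N ∧ v = ((l : ℝ) - (k : ℝ)) * α + (n : ℝ) }

/-- s_{k,N}: the gap from {kα} to its next neighbor among {α},...,{Nα}. -/
noncomputable def gap (α : ℝ) (N k : ℤ) : ℝ := sInf (gapSet α N k)

/-- The region A = (-1,1) × (0,∞). -/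
def regA : Set (ℝ × ℝ) := Set.Ioo (-1 : ℝ) 1 ×ˢ Set.Ioi (0 : ℝ)

/-!
Every lattice point of `A` has height at least `r₂`, and a point of height `r₂` in `A` has first
coordinate `≥ r₁` or `≤ s₁`; so `F(M,t) = r₂` exactly when the window `(-t, 1-t]` contains `r₁` or
`s₁`. Otherwise the window contains `r₁ + s₁`, the first coordinate of `r + s`, of height `2r₂`.
Nothing smaller can occur: if `p ∈ A ∩ ℤ²M` had `r₂ < p₂ < 2r₂`, then `p - r` or `p - s` would be a
point of `A` below height `r₂`.
-/

namespace F_degenerate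

variable {M : Matrix.SpecialLinearGroup (Fin 2) ℝ}

theorem add_mem_lat {p q : ℝ × ℝ} (hp : p ∈ lat M) (hq : q ∈ lat M) : p + q ∈ lat M := by
  obtain ⟨m, n, rfl⟩ := hp
  obtain ⟨m', n', rfl⟩ := hq
  refine ⟨m + m', n + n', ?_⟩
  push_cast
  ext <;> simp only [Prod.fst_add, Prod.snd_add] <;> ring

theorem sub_mem_lat {p q : ℝ × ℝ} (hp : p ∈ lat M) (hq : q ∈ lat M) : p - q ∈ lat M := by
  obtain ⟨m, n, rfl⟩ := hp
  obtain ⟨m', n', rfl⟩ := hq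
  refine ⟨m - m', n - n', ?_⟩
  push_cast
  ext <;> simp only [Prod.fst_sub, Prod.snd_sub] <;> ring

theorem mem_regA_iff {p : ℝ × ℝ} : p ∈ regA ↔ (-1 < p.1 ∧ p.1 < 1) ∧ 0 < p.2 :=
  Iff.rfl

theorem exists_mem_regA_of_mem_Fset {t y : ℝ} (ht0 : 0 < t) (ht1 : t ≤ 1) (hy : y ∈ Fset M t) :
    ∃ x, (x, y) ∈ regA ∩ lat M ∧ -t < x ∧ x ≤ 1 - t := by
  obtain ⟨hy, x, hxy, hx, hx'⟩ := hy
  exact ⟨x, ⟨mem_regA_iff.2 ⟨⟨by linarith, by linarith⟩, hy⟩, hxy⟩, hx, hx'⟩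

theorem F_eq_snd_of_mem {t : ℝ} {p : ℝ × ℝ} (ht0 : 0 < t) (ht1 : t ≤ 1)
    (hmin : ∀ q ∈ regA ∩ lat M, p.2 ≤ q.2) (hp : p ∈ lat M) (hp2 : 0 < p.2)
    (hx : -t < p.1) (hx' : p.1 ≤ 1 - t) : F M t = p.2 := by
  refine IsLeast.csInf_eq ⟨⟨hp2, p.1, hp, hx, hx'⟩, fun y hy => ?_⟩
  obtain ⟨x, hxy, -⟩ := exists_mem_regA_of_mem_Fset ht0 ht1 hy
  exact hmin _ hxy

theorem two_mul_le_snd_of_lt {r s p : ℝ × ℝ} (hr : r ∈ regA ∩ lat M) (hs : s ∈ regA ∩ lat M)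
    (heq : s.2 = r.2) (hrmin : ∀ q ∈ regA ∩ lat M, r.2 ≤ q.2) (hr1 : 0 ≤ r.1) (hs1 : s.1 < 0)
    (hp : p ∈ regA ∩ lat M) (hlt : r.2 < p.2) : 2 * r.2 ≤ p.2 := by
  by_contra! hp2
  have not_below : ∀ q ∈ lat M, q.2 = r.2 → -1 < p.1 - q.1 → p.1 - q.1 < 1 → False := by
    intro q hq hq2 hx hx'
    have hpq : p - q ∈ regA ∩ lat M :=
      ⟨mem_regA_iff.2 ⟨⟨hx, hx'⟩, show 0 < p.2 - q.2 by linarith⟩, sub_mem_lat hp.2 hq⟩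
    have := hrmin _ hpq
    simp only [Prod.snd_sub] at this
    linarith
  obtain ⟨⟨hp1_gt, hp1_lt⟩, -⟩ := mem_regA_iff.1 hp.1
  have hr1_lt : r.1 < 1 := hr.1.1.2
  have hs1_gt : -1 < s.1 := hs.1.1.1
  by_cases h : -1 < p.1 - r.1
  · exact not_below r hr.2 rfl h (by linarith)
  · exact not_below s hs.2 heq (by linarith) (by linarith)

theorem two_mul_le_of_mem_Fset {r s : ℝ × ℝ} {t y : ℝ} (hr : r ∈ regA ∩ lat M)
    (hs : s ∈ regA ∩ lat M) (heq : s.2 = r.2) (hrmin : ∀ p ∈ regA ∩ lat M, r.2 ≤ p.2)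
    (hr1 : 0 ≤ r.1) (hr1min : ∀ p ∈ regA ∩ lat M, p.2 = r.2 → 0 ≤ p.1 → r.1 ≤ p.1)
    (hs1 : s.1 < 0) (hs1max : ∀ p ∈ regA ∩ lat M, p.2 = r.2 → p.1 < 0 → p.1 ≤ s.1)
    (ht0 : 0 < t) (ht1 : t ≤ 1) (htr : 1 - r.1 < t) (hts : t ≤ -s.1) (hy : y ∈ Fset M t) :
    2 * r.2 ≤ y := by
  obtain ⟨x, hxy, hx, hx'⟩ := exists_mem_regA_of_mem_Fset ht0 ht1 hy
  rcases (hrmin _ hxy).lt_or_eq with hlt | height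
  · exact two_mul_le_snd_of_lt hr hs heq hrmin hr1 hs1 hxy hlt
  · rcases le_or_gt 0 x with hx0 | hx0
    · linarith [hr1min _ hxy height.symm hx0]
    · linarith [hs1max _ hxy height.symm hx0]

end F_degenerate

open F_degenerate in
/-- The degenerate case s₂ = r₂ of the three gap analysis. -/
theorem F_formula_degenerate (M : Matrix.SpecialLinearGroup (Fin 2) ℝ)
    (r s : ℝ × ℝ)
    (hr : r ∈ regA ∩ lat M)
    (hs : s ∈ regA ∩ lat M)
    (heq : s.2 = r.2)
    (hrmin : ∀ p ∈ regA ∩ lat M, r.2 ≤ p.2)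
    (hr1 : 0 ≤ r.1)
    (hr1min : ∀ p ∈ regA ∩ lat M, p.2 = r.2 → 0 ≤ p.1 → r.1 ≤ p.1)
    (hs1 : s.1 < 0)
    (hs1max : ∀ p ∈ regA ∩ lat M, p.2 = r.2 → p.1 < 0 → p.1 ≤ s.1) :
    ∀ t : ℝ, 0 < t → t ≤ 1 →
      ((t ∈ Set.Ioc (0 : ℝ) (1 - r.1) ∪ Set.Ioc (-s.1) 1 → F M t = r.2) ∧
       (t ∉ Set.Ioc (0 : ℝ) (1 - r.1) ∪ Set.Ioc (-s.1) 1 → F M t = 2 * r.2)) := by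
  intro t ht0 ht1
  obtain ⟨⟨-, hr1_lt⟩, hr2⟩ := mem_regA_iff.1 hr.1
  have hs1_gt : -1 < s.1 := hs.1.1.1
  refine ⟨?_, fun hout => ?_⟩
  · rintro (⟨-, htr⟩ | ⟨hts, -⟩)
    · exact F_eq_snd_of_mem ht0 ht1 hrmin hr.2 hr2 (by linarith) (by linarith)
    · rw [← heq] at hrmin hr2 ⊢
      exact F_eq_snd_of_mem ht0 ht1 hrmin hs.2 hr2 (by linarith) (by linarith)
  · simp only [mem_union, mem_Ioc, not_or, not_and, not_le] at hout
    have htr : 1 - r.1 < t := hout.1 ht0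
    have hts : t ≤ -s.1 := not_lt.1 fun h => (hout.2 h).not_ge ht1
    refine IsLeast.csInf_eq ⟨⟨by linarith, r.1 + s.1, ?_, by linarith, by linarith⟩,
      fun y hy => two_mul_le_of_mem_Fset hr hs heq hrmin hr1 hr1min hs1 hs1max ht0 ht1 htr hts hy⟩
    convert add_mem_lat hr.2 hs.2 using 1
    ext <;> simp [two_mul, heq]
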